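/- arXiv:math/0202153 — 2 statements merged into one kernel-verified Lean document; each statement's English description precedes it below -/
import Mathlib

section
/- (Corollary 6.7) Let ξ = exp(iπ/5) ∈ ℂ and τ = (1+√5)/2. For every n ∈ ℕ, the set L(n) := {x ∈ ℝ : ∃ (n₀, …, n₉) ∈ ℕ¹⁰, Σ_{j=0}^{9} n_j ≤ n and x = Σ_{j=0}^{9} n_j ξ^j} equals {(a + c) + (b - c)τ : a, b, c ∈ ℤ, |a| + 2|b| + 2|c| ≤ n}. -/
noncomputable def tau : ℝ := (1 + Real.sqrt 5) / 2

/-- ξ = exp(iπ/5), a primitive 10th root of unity. -/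
noncomputable def xi : ℂ := Complex.exp (Real.pi * Complex.I / 5)

/-- L(n): the real points of the quasicrystal fragment Q₂(n), i.e. the real numbers
which are sums of at most n 10th roots of unity. -/
noncomputable def L (n : ℕ) : Set ℝ :=
  {x : ℝ | ∃ m : Fin 10 → ℕ, (∑ j, m j) ≤ n ∧ (x : ℂ) = ∑ j, (m j : ℂ) * xi ^ (j : ℕ)}

/-!
Since `ξ ^ 5 = -1`, the sums of at most `n` tenth roots of unity are exactly the integer
combinations `∑_{k<5} d_k ξ^k` with `∑ |d_k| ≤ n`. As `2 cos (π/5) = τ`, `ξ² = τξ - 1`, so such a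
combination equals `P + Qξ` with `P, Q ∈ ℤ[τ]`. Because `ξ` is not real and `τ` is irrational, it
is real exactly when `d₄ = -d₁` and `d₃ = -d₂`; its value is then `(d₀ - d₂) + (d₁ + d₂)τ`, and
`∑ |d_k| = |d₀| + 2|d₁| + 2|d₂|`.
-/

open Finset

theorem Irrational.intCast_add_intCast_mul_eq_zero_iff {x : ℝ} (hx : Irrational x) {a b : ℤ} :
    (a : ℝ) + b * x = 0 ↔ a = 0 ∧ b = 0 := by
  refine ⟨fun h => ?_, fun ⟨ha, hb⟩ => by simp [ha, hb]⟩
  by_cases hb : b = 0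
  · simp only [hb, Int.cast_zero, zero_mul, add_zero, Int.cast_eq_zero] at h
    exact ⟨h, hb⟩
  · exact absurd h ((hx.intCast_mul hb).intCast_add a).ne_zero

theorem Complex.ofReal_eq_add_mul_iff {w : ℂ} (hw : w.im ≠ 0) {x p q : ℝ} :
    (x : ℂ) = p + q * w ↔ x = p ∧ q = 0 := by
  constructor
  · intro h
    have hq : q = 0 := (mul_eq_zero.mp (by simpa using congrArg Complex.im h)).resolve_right hw
    exact ⟨by simpa [hq] using h, hq⟩
  · rintro ⟨rfl, rfl⟩
    simp

theorem Complex.exp_ofReal_mul_I_sq (θ : ℝ) :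
    Complex.exp (θ * Complex.I) ^ 2 = 2 * Real.cos θ * Complex.exp (θ * Complex.I) - 1 := by
  rw [Complex.ofReal_cos, Complex.two_cos, add_mul, ← Complex.exp_add, ← Complex.exp_add,
    ← Complex.exp_nat_mul]
  ring_nf
  simp

theorem sum_fin_add_mul_pow_of_pow_eq_neg_one {R : Type*} [CommRing R] {N : ℕ} {ζ : R}
    (hζ : ζ ^ N = -1) (m : Fin (N + N) → ℕ) :
    ∑ j, (m j : R) * ζ ^ (j : ℕ) =
      ∑ k : Fin N, ((m (Fin.castAdd N k) - m (Fin.natAdd N k) : ℤ) : R) * ζ ^ (k : ℕ) := by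
  rw [Fin.sum_univ_add, ← sum_add_distrib]
  refine sum_congr rfl fun k _ => ?_
  rw [Fin.val_natAdd, pow_add, hζ, Fin.val_castAdd]
  push_cast
  ring

theorem exists_natSum_mul_pow_iff_exists_intSum_mul_pow {R : Type*} [CommRing R] {N : ℕ} {ζ : R}
    (hζ : ζ ^ N = -1) (n : ℕ) (z : R) :
    (∃ m : Fin (N + N) → ℕ, ∑ j, m j ≤ n ∧ z = ∑ j, (m j : R) * ζ ^ (j : ℕ)) ↔
      ∃ d : Fin N → ℤ, ∑ k, |d k| ≤ n ∧ z = ∑ k, (d k : R) * ζ ^ (k : ℕ) := by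
  constructor
  · rintro ⟨m, hm, rfl⟩
    refine ⟨fun k => m (Fin.castAdd N k) - m (Fin.natAdd N k), ?_,
      sum_fin_add_mul_pow_of_pow_eq_neg_one hζ m⟩
    calc ∑ k, |(m (Fin.castAdd N k) : ℤ) - m (Fin.natAdd N k)|
        ≤ ∑ k, ((m (Fin.castAdd N k) : ℤ) + m (Fin.natAdd N k)) :=
          sum_le_sum fun k _ => (abs_sub _ _).trans (by simp)
      _ = ∑ j, (m j : ℤ) := by rw [Fin.sum_univ_add, sum_add_distrib]
      _ ≤ n := by exact_mod_cast hm
  · rintro ⟨d, hd, rfl⟩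
    refine ⟨Fin.append (fun k => (d k).toNat) (fun k => (-d k).toNat), ?_, ?_⟩
    · zify
      simp only [Fin.sum_univ_add, Fin.append_left, Fin.append_right, ← sum_add_distrib]
      simpa [Int.toNat_add_toNat_neg_eq_natAbs] using hd
    · rw [sum_fin_add_mul_pow_of_pow_eq_neg_one hζ]
      simp only [Fin.append_left, Fin.append_right, Int.toNat_sub_toNat_neg]

theorem tau_irrational : Irrational tau := Real.goldenRatio_irrational

theorem tau_sq : (tau : ℂ) ^ 2 = tau + 1 := by
  exact_mod_cast Real.goldenRatio_sq

theorem tau_eq_two_mul_cos : tau = 2 * Real.cos (Real.pi / 5) := by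
  rw [Real.cos_pi_div_five, tau]
  ring

theorem xi_eq_exp : xi = Complex.exp ((Real.pi / 5 : ℝ) * Complex.I) := by
  rw [xi]
  push_cast
  ring_nf

theorem xi_pow_five : xi ^ 5 = -1 := by
  rw [xi, ← Complex.exp_nat_mul, ← Complex.exp_pi_mul_I]
  push_cast
  ring_nf

theorem xi_sq : xi ^ 2 = tau * xi - 1 := by
  rw [xi_eq_exp, Complex.exp_ofReal_mul_I_sq, tau_eq_two_mul_cos]
  push_cast
  ring

theorem xi_im_ne_zero : xi.im ≠ 0 := by
  rw [xi_eq_exp, Complex.exp_ofReal_mul_I_im]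
  exact (Real.sin_pos_of_pos_of_lt_pi (by positivity) (by linarith [Real.pi_pos])).ne'

theorem sum_fin_five_mul_xi_pow (d : Fin 5 → ℤ) :
    ∑ k, (d k : ℂ) * xi ^ (k : ℕ) =
      (((d 0 - d 2 : ℤ) + (-(d 3 + d 4) : ℤ) * tau : ℝ) : ℂ) +
        (((d 1 + d 4 : ℤ) + (d 2 + d 3 : ℤ) * tau : ℝ) : ℂ) * xi := by
  have h3 : xi ^ 3 = tau * xi - tau := by linear_combination (xi + tau) * xi_sq + xi * tau_sq
  have h4 : xi ^ 4 = xi - tau := by linear_combination xi * h3 + tau * xi_sq + xi * tau_sq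
  rw [Fin.sum_univ_five]
  simp only [Fin.coe_ofNat_eq_mod, Nat.reduceMod]
  push_cast
  linear_combination (d 2 : ℂ) * xi_sq + (d 3 : ℂ) * h3 + (d 4 : ℂ) * h4

theorem ofReal_eq_sum_fin_five_mul_xi_pow_iff (x : ℝ) (d : Fin 5 → ℤ) :
    (x : ℂ) = ∑ k, (d k : ℂ) * xi ^ (k : ℕ) ↔
      d 1 + d 4 = 0 ∧ d 2 + d 3 = 0 ∧ x = (d 0 - d 2 : ℤ) + (d 1 + d 2 : ℤ) * tau := by
  rw [sum_fin_five_mul_xi_pow, Complex.ofReal_eq_add_mul_iff xi_im_ne_zero,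
    tau_irrational.intCast_add_intCast_mul_eq_zero_iff]
  constructor
  · rintro ⟨hx, h14, h23⟩
    exact ⟨h14, h23, by rwa [show -(d 3 + d 4) = d 1 + d 2 by omega] at hx⟩
  · rintro ⟨h14, h23, hx⟩
    exact ⟨by rwa [show -(d 3 + d 4) = d 1 + d 2 by omega], h14, h23⟩

/-- Corollary 6.7: L(n) = {(a+c) + (b-c)τ : a,b,c ∈ ℤ, |a| + 2|b| + 2|c| ≤ n}. -/
theorem L_eq (n : ℕ) :
    L n = {x : ℝ | ∃ a b c : ℤ, |a| + 2 * |b| + 2 * |c| ≤ (n : ℤ) ∧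
      x = ((a + c : ℤ) : ℝ) + ((b - c : ℤ) : ℝ) * tau} := by
  ext x
  -- `L n` unfolds to the left-hand side with `Fin 10`, definitionally `Fin (5 + 5)`.
  refine (exists_natSum_mul_pow_iff_exists_intSum_mul_pow (N := 5) xi_pow_five n x).trans ?_
  simp_rw [ofReal_eq_sum_fin_five_mul_xi_pow_iff, Fin.sum_univ_five]
  constructor
  · rintro ⟨d, hd, h14, h23, rfl⟩
    have h4 : |d 4| = |d 1| := by rw [show d 4 = -d 1 by omega, abs_neg]
    have h3 : |d 3| = |d 2| := by rw [show d 3 = -d 2 by omega, abs_neg]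
    refine ⟨d 0, d 1, -d 2, ?_, by push_cast; ring⟩
    rw [abs_neg]
    linarith
  · rintro ⟨a, b, c, h, rfl⟩
    refine ⟨![a, b, -c, c, -b], ?_, by simp, by simp, by push_cast; ring⟩
    simp only [Matrix.cons_val, abs_neg]
    linarith
end

section
/- (Lemma 6.10) Let ξ = exp(iπ/5) ∈ ℂ, τ = (1+√5)/2 and τ' = 1 - τ. For every integer n ≥ 3 there exist p, q ∈ ℤ such that |p + qτ| ≤ n and |p + qτ'| ≤ n, yet p + qτ is not expressible as Σ_{j=0}^{9} n_j ξ^j with n_j ∈ ℕ and Σ_{j=0}^{9} n_j ≤ n. Hence the inclusion L(n) ⊆ Σ([-n, n]) ∩ [-n, n] is strict for all n ≥ 3 (deficiencies occur). For example, for n = 3 one may take the point -1 + 2τ. -/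
noncomputable def tau' : ℝ := 1 - tau

open Real goldenRatio

/-!
For every `j`, `2 Re ξ^j = 2 cos (jπ/5)` is `a + bτ` with `a, b ∈ ℤ` and `|b| ≤ 1`: indeed
`2 cos (π/5) = τ`, `2 cos (2π/5) = τ - 1`, and `cos (x + π) = -cos x`. As `τ` is irrational,
the `τ`-coordinate of a point `p + qτ = Σ n_j Re ξ^j` of `L(n)` can be read off termwise, which
gives `2q ≤ Σ n_j ≤ n`. On the other hand, for `q = ⌊n/2⌋ + 1` pick `p` with
`p + qτ ∈ (n - 1, n]`; its conjugate `p + qτ' = p + qτ - q√5` is still `≥ -n` because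
`q√5 < 9q/4 ≤ 2n - 1`.
-/

lemma Irrational.eq_of_intCast_add_mul_eq {x : ℝ} (hx : Irrational x) {a b c d : ℤ}
    (h : (a : ℝ) + b * x = c + d * x) : b = d := by
  by_contra hbd
  have hsub : x * ((b - d : ℤ) : ℝ) = ((c - a : ℤ) : ℝ) := by push_cast; linarith
  exact (hx.mul_intCast (sub_ne_zero.mpr hbd)).ne_int _ hsub

lemma two_mul_cos_two_pi_div_five : 2 * cos (2 * π / 5) = -1 + φ := by
  rw [show 2 * π / 5 = 2 * (π / 5) by ring, cos_two_mul, cos_pi_div_five, goldenRatio]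
  nlinarith [sq_sqrt (show (0 : ℝ) ≤ 5 by norm_num)]

lemma exists_two_mul_cos_nat_mul_pi_div_five (j : ℕ) :
    ∃ a b : ℤ, |b| ≤ 1 ∧ 2 * cos (j * π / 5) = a + b * φ := by
  suffices key : ∀ s : ℕ, s < 5 → ∃ a b : ℤ, |b| ≤ 1 ∧ 2 * cos (s * π / 5) = a + b * φ by
    obtain ⟨a, b, hb, hab⟩ := key (j % 5) (Nat.mod_lt _ (by norm_num : 0 < 5))
    have hj : (j : ℝ) * π / 5 = (j % 5 : ℕ) * π / 5 + (j / 5 : ℕ) * π := by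
      conv_lhs => rw [← Nat.mod_add_div j 5]
      push_cast; ring
    rcases neg_one_pow_eq_or ℝ (j / 5) with hk | hk
    · exact ⟨a, b, hb, by rw [hj, cos_add_nat_mul_pi, hk, one_mul, hab]⟩
    · refine ⟨-a, -b, by rwa [abs_neg], ?_⟩
      rw [hj, cos_add_nat_mul_pi, hk]; push_cast; linarith
  have h1 : 2 * cos (π / 5) = φ := by rw [cos_pi_div_five]; ring
  intro s hs
  interval_cases s
  · exact ⟨2, 0, by norm_num, by simp⟩
  · exact ⟨0, 1, by norm_num, by simpa using h1⟩
  · exact ⟨-1, 1, by norm_num, by simpa using two_mul_cos_two_pi_div_five⟩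
  · refine ⟨1, -1, by norm_num, ?_⟩
    rw [show (3 : ℕ) * π / 5 = π - 2 * π / 5 by push_cast; ring, cos_pi_sub]; push_cast
    linarith [two_mul_cos_two_pi_div_five]
  · refine ⟨0, -1, by norm_num, ?_⟩
    rw [show (4 : ℕ) * π / 5 = π - π / 5 by push_cast; ring, cos_pi_sub]; push_cast
    linarith

lemma tau_eq_goldenRatio : tau = φ := rfl

lemma re_xi_pow (j : ℕ) : (xi ^ j).re = cos (j * π / 5) := by
  rw [xi, ← Complex.exp_nat_mul, ← Complex.exp_ofReal_mul_I_re]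
  push_cast; ring_nf

lemma two_mul_le_of_add_mul_tau_mem_L {n : ℕ} {p q : ℤ} (h : (p : ℝ) + q * tau ∈ L n) :
    2 * q ≤ n := by
  obtain ⟨m, hm, hx⟩ := h
  choose a b hb hab using exists_two_mul_cos_nat_mul_pi_div_five
  have hre : (p : ℝ) + q * tau = ∑ j, m j * cos (j * π / 5) := by
    simpa [Complex.re_sum, re_xi_pow] using congrArg Complex.re hx
  have hcoord : ((2 * p : ℤ) : ℝ) + ((2 * q : ℤ) : ℝ) * φ
      = ((∑ j, m j * a j : ℤ) : ℝ) + ((∑ j, m j * b j : ℤ) : ℝ) * φ :=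
    calc ((2 * p : ℤ) : ℝ) + ((2 * q : ℤ) : ℝ) * φ = 2 * ((p : ℝ) + q * tau) := by
          push_cast; rw [tau_eq_goldenRatio]; ring
      _ = ∑ j, (m j : ℝ) * (2 * cos ((j : ℕ) * π / 5)) := by
          rw [hre, Finset.mul_sum]; exact Finset.sum_congr rfl fun j _ => by ring
      _ = ∑ j, ((m j : ℝ) * a j + (m j : ℝ) * b j * φ) := by simp only [hab, mul_add, mul_assoc]
      _ = _ := by push_cast; rw [Finset.sum_add_distrib, Finset.sum_mul]
  rw [goldenRatio_irrational.eq_of_intCast_add_mul_eq hcoord]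
  calc ∑ j, (m j : ℤ) * b j ≤ ∑ j, (m j : ℤ) :=
        Finset.sum_le_sum fun j _ => mul_le_of_le_one_right (by positivity) (abs_le.mp (hb j)).2
    _ ≤ n := by exact_mod_cast hm

lemma sqrt_five_lt : √5 < 9 / 4 := by
  rw [sqrt_lt' (by norm_num)]; norm_num

lemma exists_add_mul_tau_mem_window {n : ℕ} {q : ℤ} (hq : 0 ≤ q) (hqn : 9 * q ≤ 8 * n - 4) :
    ∃ p : ℤ, |(p : ℝ) + q * tau| ≤ n ∧ |(p : ℝ) + q * tau'| ≤ n := by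
  have hqn' : 9 * (q : ℝ) ≤ 8 * n - 4 := by exact_mod_cast hqn
  have hq' : (0 : ℝ) ≤ q := by exact_mod_cast hq
  have hq_sqrt : 0 ≤ (q : ℝ) * √5 ∧ (q : ℝ) * √5 ≤ q * (9 / 4) :=
    ⟨by positivity, mul_le_mul_of_nonneg_left sqrt_five_lt.le hq'⟩
  have hconj : tau' = tau - √5 := by rw [tau', tau]; ring
  have hlo := Int.sub_one_lt_floor ((n : ℝ) - q * tau)
  have hhi := Int.floor_le ((n : ℝ) - q * tau)
  refine ⟨⌊(n : ℝ) - q * tau⌋, abs_le.mpr ⟨by linarith, by linarith⟩, abs_le.mpr ⟨?_, ?_⟩⟩ <;>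
    rw [hconj, mul_sub] <;> linarith [hq_sqrt.1, hq_sqrt.2]

/-- Lemma 6.10: for every n ≥ 3 the inclusion L(n) ⊆ Σ([-n,n]) ∩ [-n,n] is strict:
there is a point of the cut-and-project set Σ([-n,n]) in [-n,n] not belonging to L(n).
For n = 3, the point -1 + 2τ is such a deficiency. -/
theorem deficiencies_occur :
    (∀ n : ℕ, 3 ≤ n → ∃ p q : ℤ,
      |(p : ℝ) + (q : ℝ) * tau| ≤ (n : ℝ) ∧
      |(p : ℝ) + (q : ℝ) * tau'| ≤ (n : ℝ) ∧
      ((p : ℝ) + (q : ℝ) * tau) ∉ L n) ∧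
    (|(-1 : ℝ) + 2 * tau| ≤ (3 : ℝ) ∧ |(-1 : ℝ) + 2 * tau'| ≤ (3 : ℝ) ∧
      ((-1 : ℝ) + 2 * tau) ∉ L 3) := by
  refine ⟨fun n hn => ?_, ?_⟩
  · obtain ⟨p, hp, hp'⟩ :=
      exists_add_mul_tau_mem_window (n := n) (q := n / 2 + 1) (by omega) (by omega)
    refine ⟨p, n / 2 + 1, hp, hp', fun h => ?_⟩
    have := two_mul_le_of_add_mul_tau_mem_L h
    omega
  · have hsqrt : (-1 : ℝ) + 2 * tau = √5 ∧ (-1 : ℝ) + 2 * tau' = -√5 := by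
      constructor <;> (simp only [tau', tau]; ring)
    refine ⟨?_, ?_, fun h => ?_⟩
    · rw [hsqrt.1, abs_of_nonneg (sqrt_nonneg 5)]; linarith [sqrt_five_lt]
    · rw [hsqrt.2, abs_neg, abs_of_nonneg (sqrt_nonneg 5)]; linarith [sqrt_five_lt]
    · have := two_mul_le_of_add_mul_tau_mem_L (p := -1) (q := 2) (by exact_mod_cast h)
      omega
end
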